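/- Let ξ > 0 be such that D_ξ := DᵀD − ξ²I is invertible, and let ω ∈ ℝ be such that A(iω) is invertible. Then the determinant identity det H_ξ(iω) · det D_ξ = det(G(iω)* G(iω) − ξ² I) · det A(iω) · det(−A(iω)*) holds. -/

import Mathlib

open Matrix Complex

noncomputable section

variable {n nu ny m : ℕ}

/-- `D_ξ = Dᵀ D − ξ² I`. -/
def Dxi (D : Matrix (Fin ny) (Fin nu) ℝ) (ξ : ℝ) : Matrix (Fin nu) (Fin nu) ℝ :=
  Dᵀ * D - ξ ^ 2 • (1 : Matrix (Fin nu) (Fin nu) ℝ)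

/-- `(Dᵀ)_ξ = D Dᵀ − ξ² I`, the matrix denoted `D_ξ^{-T}`-inverse base in the paper
(the only dimensionally consistent reading of the `(2,1)` block of `M₀`).
Note that it is invertible iff `D_ξ` is (for `ξ ≠ 0`), since `DᵀD` and `DDᵀ` have the
same nonzero eigenvalues. -/
def DxiT (D : Matrix (Fin ny) (Fin nu) ℝ) (ξ : ℝ) : Matrix (Fin ny) (Fin ny) ℝ :=
  D * Dᵀ - ξ ^ 2 • (1 : Matrix (Fin ny) (Fin ny) ℝ)

/-- The block matrix `M₀`. -/
def Mzero (A0 : Matrix (Fin n) (Fin n) ℝ) (B : Matrix (Fin n) (Fin nu) ℝ)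
    (C : Matrix (Fin ny) (Fin n) ℝ) (D : Matrix (Fin ny) (Fin nu) ℝ) (ξ : ℝ) :
    Matrix (Fin n ⊕ Fin n) (Fin n ⊕ Fin n) ℝ :=
  fromBlocks (A0 - B * (Dxi D ξ)⁻¹ * Dᵀ * C) (-(B * (Dxi D ξ)⁻¹ * Bᵀ))
    (ξ ^ 2 • (Cᵀ * (DxiT D ξ)⁻¹ * C)) (-A0ᵀ + Cᵀ * D * (Dxi D ξ)⁻¹ * Bᵀ)

/-- The block matrix `Mᵢ` for `1 ≤ i ≤ m`. -/
def Mpos (Ai : Matrix (Fin n) (Fin n) ℝ) : Matrix (Fin n ⊕ Fin n) (Fin n ⊕ Fin n) ℝ :=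
  fromBlocks Ai 0 0 0

/-- The block matrix `M₋ᵢ` for `1 ≤ i ≤ m`. -/
def Mneg (Ai : Matrix (Fin n) (Fin n) ℝ) : Matrix (Fin n ⊕ Fin n) (Fin n ⊕ Fin n) ℝ :=
  fromBlocks 0 0 0 (-Aiᵀ)

/-- `H_ξ(λ) = λI − M₀ − Σᵢ (Mᵢ e^{−λτᵢ} + M₋ᵢ e^{λτᵢ})`. -/
def Hxi (A0 : Matrix (Fin n) (Fin n) ℝ) (A : Fin m → Matrix (Fin n) (Fin n) ℝ)
    (B : Matrix (Fin n) (Fin nu) ℝ) (C : Matrix (Fin ny) (Fin n) ℝ)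
    (D : Matrix (Fin ny) (Fin nu) ℝ) (τ : Fin m → ℝ) (ξ : ℝ) (lam : ℂ) :
    Matrix (Fin n ⊕ Fin n) (Fin n ⊕ Fin n) ℂ :=
  lam • (1 : Matrix (Fin n ⊕ Fin n) (Fin n ⊕ Fin n) ℂ)
    - (Mzero A0 B C D ξ).map Complex.ofReal
    - ∑ i : Fin m, (Complex.exp (-lam * (τ i : ℂ)) • (Mpos (A i)).map Complex.ofReal
        + Complex.exp (lam * (τ i : ℂ)) • (Mneg (A i)).map Complex.ofReal)

/-- `A(λ) = λI − A₀ − Σᵢ Aᵢ e^{−λτᵢ}`. -/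
def Amat (A0 : Matrix (Fin n) (Fin n) ℝ) (A : Fin m → Matrix (Fin n) (Fin n) ℝ)
    (τ : Fin m → ℝ) (lam : ℂ) : Matrix (Fin n) (Fin n) ℂ :=
  lam • (1 : Matrix (Fin n) (Fin n) ℂ) - A0.map Complex.ofReal
    - ∑ i : Fin m, Complex.exp (-lam * (τ i : ℂ)) • (A i).map Complex.ofReal

/-- The transfer function `G(λ) = C A(λ)⁻¹ B + D`. -/
def Gmat (A0 : Matrix (Fin n) (Fin n) ℝ) (A : Fin m → Matrix (Fin n) (Fin n) ℝ)
    (B : Matrix (Fin n) (Fin nu) ℝ) (C : Matrix (Fin ny) (Fin n) ℝ)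
    (D : Matrix (Fin ny) (Fin nu) ℝ) (τ : Fin m → ℝ) (lam : ℂ) :
    Matrix (Fin ny) (Fin nu) ℂ :=
  C.map Complex.ofReal * (Amat A0 A τ lam)⁻¹ * B.map Complex.ofReal + D.map Complex.ofReal

/-- `τ_max`, the maximum of the delays. -/
def tauMax [NeZero m] (τ : Fin m → ℝ) : ℝ :=
  Finset.univ.sup' Finset.univ_nonempty τ

/-- `λ` is an eigenvalue of the infinite-dimensional operator `L_ξ`: there is a continuously
differentiable, not identically zero function `u : [−τ_max, τ_max] → ℂ^{2n}` with
`u′(t) = λ u(t)` on the interval and `u′(0) = M₀ u(0) + Σᵢ (Mᵢ u(−τᵢ) + M₋ᵢ u(τᵢ))`. -/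
def IsEigLxi [NeZero m] (A0 : Matrix (Fin n) (Fin n) ℝ) (A : Fin m → Matrix (Fin n) (Fin n) ℝ)
    (B : Matrix (Fin n) (Fin nu) ℝ) (C : Matrix (Fin ny) (Fin n) ℝ)
    (D : Matrix (Fin ny) (Fin nu) ℝ) (τ : Fin m → ℝ) (ξ : ℝ) (lam : ℂ) : Prop :=
  ∃ u : ℝ → (Fin n ⊕ Fin n → ℂ),
    (∀ t ∈ Set.Icc (-(tauMax τ)) (tauMax τ),
      HasDerivWithinAt u (lam • u t) (Set.Icc (-(tauMax τ)) (tauMax τ)) t) ∧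
    (∃ t ∈ Set.Icc (-(tauMax τ)) (tauMax τ), u t ≠ 0) ∧
    lam • u 0 = (Mzero A0 B C D ξ).map Complex.ofReal *ᵥ u 0
      + ∑ i : Fin m, ((Mpos (A i)).map Complex.ofReal *ᵥ u (-(τ i))
          + (Mneg (A i)).map Complex.ofReal *ᵥ u (τ i))

/-!
The push-through identity `ξ² (DDᵀ - ξ²)⁻¹ = D (DᵀD - ξ²)⁻¹ Dᵀ - 1` turns the `(2,1)` block of
`M₀` into `CᵀD D_ξ⁻¹ DᵀC - CᵀC`, so that `H_ξ(λ) = K + U D_ξ⁻¹ V` with `U = [B; -CᵀD]`,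
`V = [DᵀC, Bᵀ]` and the block lower-triangular `K = [[A(λ), 0], [CᵀC, -A(-λ̄)*]]`; on the
imaginary axis `-λ̄ = λ`. Computing the determinant of `[[K, U], [-V, D_ξ]]` by both Schur
complements gives `det (K + U D_ξ⁻¹ V) · det D_ξ = det K · det (D_ξ + V K⁻¹ U)`, and with the
explicit inverse of `K` the complement `D_ξ + V K⁻¹ U` is exactly `G(iω)* G(iω) - ξ² I`.
-/

namespace Matrix

variable {ι κ η : Type*}

theorem det_add_mul_inv_mul_mul_det [Fintype ι] [DecidableEq ι] [Fintype κ] [DecidableEq κ]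
    {R : Type*} [CommRing R] {K : Matrix ι ι R} {E : Matrix κ κ R} (hK : IsUnit K.det)
    (hE : IsUnit E.det) (U : Matrix ι κ R) (V : Matrix κ ι R) :
    (K + U * E⁻¹ * V).det * E.det = K.det * (E + V * K⁻¹ * U).det := by
  let := invertibleOfIsUnitDet K hK
  let := invertibleOfIsUnitDet E hE
  have h₁₁ := det_fromBlocks₁₁ K U (-V) E
  have h₂₂ := det_fromBlocks₂₂ K U (-V) E
  simp only [invOf_eq_nonsing_inv, Matrix.mul_neg, Matrix.neg_mul, sub_neg_eq_add] at h₁₁ h₂₂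
  rw [mul_comm, ← h₂₂, h₁₁]

theorem smul_inv_mul_sub_smul_one [Fintype ι] [DecidableEq ι] [Fintype κ] [DecidableEq κ]
    {K : Type*} [Field K] (X : Matrix ι κ K) (Y : Matrix κ ι K) {s : K} (hs : s ≠ 0)
    (h : IsUnit (Y * X - s • 1).det) :
    s • (X * Y - s • 1)⁻¹ = X * (Y * X - s • 1)⁻¹ * Y - 1 := by
  have hswap : (X * Y - s • 1) * X = X * (Y * X - s • 1) := by
    simp only [Matrix.sub_mul, Matrix.mul_sub, Matrix.smul_mul, Matrix.mul_smul, Matrix.one_mul,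
      Matrix.mul_one, Matrix.mul_assoc]
  have hright : (X * Y - s • 1) * (s⁻¹ • (X * (Y * X - s • 1)⁻¹ * Y - 1)) = 1 := by
    rw [Matrix.mul_smul, Matrix.mul_sub, ← Matrix.mul_assoc, ← Matrix.mul_assoc, hswap,
      Matrix.mul_assoc X, Matrix.mul_nonsing_inv _ h, Matrix.mul_one, Matrix.mul_one,
      sub_sub_cancel, smul_smul, inv_mul_cancel₀ hs, one_smul]
  rw [inv_eq_right_inv hright, smul_smul, mul_inv_cancel₀ hs, one_smul]

theorem fromCols_mul_inv_fromBlocks_mul_fromRows [Fintype ι] [DecidableEq ι] [Fintype η]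
    {𝕜 : Type*} [Field 𝕜] [StarRing 𝕜] {a : Matrix ι ι 𝕜} (ha : IsUnit a.det)
    (b : Matrix ι κ 𝕜) (c : Matrix η ι 𝕜) (d : Matrix η κ 𝕜) :
    fromCols (dᴴ * c) bᴴ * (fromBlocks a 0 (cᴴ * c) (-aᴴ))⁻¹ * fromRows b (-(cᴴ * d))
      = (c * a⁻¹ * b + d)ᴴ * (c * a⁻¹ * b + d) - dᴴ * d := by
  have hunit : IsUnit a ↔ IsUnit (-aᴴ) := by simp
  have hinv : (-aᴴ)⁻¹ = -a⁻¹ᴴ := inv_eq_left_inv <| by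
    rw [neg_mul_neg, ← conjTranspose_mul, mul_nonsing_inv _ ha, conjTranspose_one]
  rw [inv_fromBlocks_zero₁₂_of_isUnit_iff _ _ _ hunit, hinv, fromCols_mul_fromBlocks,
    fromCols_mul_fromRows]
  simp only [conjTranspose_add, conjTranspose_mul, Matrix.neg_mul, Matrix.mul_neg, neg_neg,
    Matrix.zero_mul, Matrix.mul_zero, Matrix.mul_add, Matrix.add_mul, Matrix.mul_assoc]
  abel

theorem det_fromBlocks_add_fromRows_mul_inv_mul_fromCols_mul_det [Fintype ι] [DecidableEq ι]
    [Fintype κ] [DecidableEq κ] [Fintype η] {𝕜 : Type*} [Field 𝕜] [StarRing 𝕜]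
    {a : Matrix ι ι 𝕜} {e : Matrix κ κ 𝕜} (ha : IsUnit a.det) (he : IsUnit e.det)
    (b : Matrix ι κ 𝕜) (c : Matrix η ι 𝕜) (d : Matrix η κ 𝕜) :
    (fromBlocks a 0 (cᴴ * c) (-aᴴ) + fromRows b (-(cᴴ * d)) * e⁻¹ * fromCols (dᴴ * c) bᴴ).det
        * e.det
      = ((c * a⁻¹ * b + d)ᴴ * (c * a⁻¹ * b + d) - (dᴴ * d - e)).det * a.det * (-aᴴ).det := by
  have hK : IsUnit (fromBlocks a 0 (cᴴ * c) (-aᴴ)).det := by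
    rw [det_fromBlocks_zero₁₂, det_neg, det_conjTranspose]
    exact ha.mul (((isUnit_one.neg).pow _).mul ha.star)
  rw [det_add_mul_inv_mul_mul_det hK he, fromCols_mul_inv_fromBlocks_mul_fromRows ha,
    det_fromBlocks_zero₁₂, sub_sub_eq_add_sub, add_comm _ e, add_sub_assoc]
  ring

theorem map_nonsing_inv [Fintype ι] [DecidableEq ι] {K L : Type*} [Field K] [Field L]
    (f : K →+* L) (M : Matrix ι ι K) : M⁻¹.map f = (M.map f)⁻¹ := by
  have hdet : (M.map f).det = f M.det := (f.map_det M).symm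
  have hadj : (M.map f).adjugate = M.adjugate.map f := (f.map_adjugate M).symm
  rw [Matrix.inv_def, Matrix.inv_def, hdet, hadj, Ring.inverse_eq_inv', Ring.inverse_eq_inv',
    ← map_inv₀ f]
  ext i j
  simp

theorem map_ofReal_mul [Fintype κ] (M : Matrix ι κ ℝ) (N : Matrix κ η ℝ) :
    (M * N).map ofReal = M.map ofReal * N.map ofReal :=
  Matrix.map_mul (f := ofRealHom)

theorem map_ofReal_transpose (M : Matrix ι κ ℝ) : Mᵀ.map ofReal = (M.map ofReal)ᴴ := by
  ext
  simp

theorem map_ofReal_nonsing_inv [Fintype ι] [DecidableEq ι] (M : Matrix ι ι ℝ) :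
    M⁻¹.map ofReal = (M.map ofReal)⁻¹ :=
  map_nonsing_inv ofRealHom M

end Matrix

theorem Mzero_eq_fromBlocks (A0 : Matrix (Fin n) (Fin n) ℝ) (B : Matrix (Fin n) (Fin nu) ℝ)
    (C : Matrix (Fin ny) (Fin n) ℝ) (D : Matrix (Fin ny) (Fin nu) ℝ) {ξ : ℝ} (hξ : ξ ≠ 0)
    (hD : IsUnit (Dxi D ξ)) :
    Mzero A0 B C D ξ = fromBlocks (A0 - B * (Dxi D ξ)⁻¹ * Dᵀ * C) (-(B * (Dxi D ξ)⁻¹ * Bᵀ))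
      (Cᵀ * D * (Dxi D ξ)⁻¹ * Dᵀ * C - Cᵀ * C) (-A0ᵀ + Cᵀ * D * (Dxi D ξ)⁻¹ * Bᵀ) := by
  have hpush := smul_inv_mul_sub_smul_one D Dᵀ (pow_ne_zero 2 hξ)
    ((isUnit_iff_isUnit_det _).mp hD)
  rw [Mzero, ← Matrix.smul_mul, ← Matrix.mul_smul, DxiT, hpush, ← Dxi]
  simp only [Matrix.mul_sub, Matrix.sub_mul, Matrix.mul_one, Matrix.mul_assoc]

theorem Hxi_eq_fromBlocks_add (A0 : Matrix (Fin n) (Fin n) ℝ)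
    (A : Fin m → Matrix (Fin n) (Fin n) ℝ) (B : Matrix (Fin n) (Fin nu) ℝ)
    (C : Matrix (Fin ny) (Fin n) ℝ) (D : Matrix (Fin ny) (Fin nu) ℝ) (τ : Fin m → ℝ) {ξ : ℝ}
    (hξ : ξ ≠ 0) (hD : IsUnit (Dxi D ξ)) (lam : ℂ) :
    Hxi A0 A B C D τ ξ lam =
      fromBlocks (Amat A0 A τ lam) 0 ((C.map ofReal)ᴴ * C.map ofReal)
          (-(Amat A0 A τ (-star lam))ᴴ)
        + fromRows (B.map ofReal) (-((C.map ofReal)ᴴ * D.map ofReal)) * ((Dxi D ξ).map ofReal)⁻¹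
          * fromCols ((D.map ofReal)ᴴ * C.map ofReal) (B.map ofReal)ᴴ := by
  rw [Hxi, Mzero_eq_fromBlocks A0 B C D hξ hD, fromBlocks_map, fromRows_mul,
    fromRows_mul_fromCols, fromBlocks_add, ← map_ofReal_nonsing_inv]
  ext (i | i) (j | j) <;>
    simp [Mpos, Mneg, Amat, Matrix.one_apply, Matrix.sum_apply, Matrix.mul_assoc, ← exp_conj,
      map_ofReal_mul, map_ofReal_transpose, Matrix.map_sub, Matrix.map_neg, Matrix.map_add] <;> ring

theorem det_Hxi_mul_det_Dxi_general
    (A0 : Matrix (Fin n) (Fin n) ℝ) (A : Fin m → Matrix (Fin n) (Fin n) ℝ)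
    (B : Matrix (Fin n) (Fin nu) ℝ) (C : Matrix (Fin ny) (Fin n) ℝ)
    (D : Matrix (Fin ny) (Fin nu) ℝ) (τ : Fin m → ℝ)
    (ξ : ℝ) (hξ : 0 < ξ) (hD : IsUnit (Dxi D ξ))
    (ω : ℝ) (hA : IsUnit (Amat A0 A τ (Complex.I * ω))) :
    (Hxi A0 A B C D τ ξ (Complex.I * ω)).det * ((Dxi D ξ).det : ℂ)
      = ((Gmat A0 A B C D τ (Complex.I * ω))ᴴ * Gmat A0 A B C D τ (Complex.I * ω)
            - ((ξ : ℂ) ^ 2) • 1).det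
          * (Amat A0 A τ (Complex.I * ω)).det * (-(Amat A0 A τ (Complex.I * ω))ᴴ).det := by
  have himag : -star (I * ω) = I * ω := by simp
  have hdet : ((Dxi D ξ).det : ℂ) = ((Dxi D ξ).map ofReal).det := ofRealHom.map_det _
  have hunit : IsUnit ((Dxi D ξ).map ofReal).det :=
    hdet ▸ ((isUnit_iff_isUnit_det _).mp hD).map ofRealHom
  have hcomplex : (Dxi D ξ).map ofReal = (D.map ofReal)ᴴ * D.map ofReal - (ξ : ℂ) ^ 2 • 1 := by
    rw [Dxi, Matrix.map_sub _ ofReal_sub, map_ofReal_mul, map_ofReal_transpose]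
    congr 1
    ext i j
    simp [Matrix.one_apply, apply_ite ofReal]
  rw [Hxi_eq_fromBlocks_add A0 A B C D τ hξ.ne' hD, himag, hdet,
    det_fromBlocks_add_fromRows_mul_inv_mul_fromCols_mul_det
      ((isUnit_iff_isUnit_det _).mp hA) hunit, hcomplex, sub_sub_cancel, Gmat]

/-- the determinant identity
`det H_ξ(iω) · det D_ξ = det(G(iω)* G(iω) − ξ² I) · det A(iω) · det(−A(iω)*)`. -/
theorem det_Hxi_mul_det_Dxi [NeZero n] [NeZero nu] [NeZero ny] [NeZero m]
    (A0 : Matrix (Fin n) (Fin n) ℝ) (A : Fin m → Matrix (Fin n) (Fin n) ℝ)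
    (B : Matrix (Fin n) (Fin nu) ℝ) (C : Matrix (Fin ny) (Fin n) ℝ)
    (D : Matrix (Fin ny) (Fin nu) ℝ) (τ : Fin m → ℝ)
    (ξ : ℝ) (hξ : 0 < ξ) (hD : IsUnit (Dxi D ξ))
    (ω : ℝ) (hA : IsUnit (Amat A0 A τ (Complex.I * ω))) :
    (Hxi A0 A B C D τ ξ (Complex.I * ω)).det * ((Dxi D ξ).det : ℂ)
      = ((Gmat A0 A B C D τ (Complex.I * ω))ᴴ * Gmat A0 A B C D τ (Complex.I * ω)
            - ((ξ : ℂ) ^ 2) • 1).det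
          * (Amat A0 A τ (Complex.I * ω)).det * (-(Amat A0 A τ (Complex.I * ω))ᴴ).det :=
  det_Hxi_mul_det_Dxi_general A0 A B C D τ ξ hξ hD ω hA
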